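/- Scalar case (d=1): let (ξ_a)_{a∈A} be i.i.d. positive random variables on the edges of the rooted b-ary tree (b ≥ 2), and for a generation-n vertex v set ξ[v] = ξ_{a_1}⋯ξ_{a_n}, the product along the root-to-v path. If b · inf_{s∈[0,1]} E[ξ_a^s] < 1, then Σ_{n≥1} Σ_{v∈V^n} ξ[v] < ∞ almost surely. -/

import Mathlib

/-!
Choose `s ∈ (0, 1]` with `b · E[ξ^s] < 1` (`s = 0` is excluded because `E[ξ⁰] = 1`). By
independence `E[ξ[v]^s] = (E[ξ^s])^n` for `v ∈ Vⁿ`, and `|Vⁿ| = bⁿ`, so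
`E[Σₙ Σ_{v ∈ Vⁿ} ξ[v]^s] = Σₙ (b · E[ξ^s])ⁿ < ∞` and `Σₙ Σ_{v ∈ Vⁿ} ξ[v]^s < ∞` a.s. On that
event the generation sums of `ξ[v]^s` tend to `0`, so eventually every `ξ[v] ≤ 1`, where
`ξ[v] ≤ ξ[v]^s`.
-/

open MeasureTheory

/-- The generation-`n` vertex set of the complete `b`-ary rooted tree, as words over
`{1, …, b}`. -/
def genF (b : ℕ) : ℕ → Finset (List ℕ)
  | 0 => {[]}
  | n + 1 => (genF b n).biUnion fun v => (Finset.Icc 1 b).image fun j => v ++ [j]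

/-- The product `ξ_{a₁} ⋯ ξ_{aₙ}` of the scalar edge variables along the root-to-`v`
path (edges being identified with non-root vertices, i.e. the prefixes of `v`). -/
noncomputable def pathProdScalar {Ω : Type*} (ξ : List ℕ → Ω → ℝ) (v : List ℕ) (ω : Ω) :
    ℝ :=
  ∏ i ∈ Finset.range v.length, ξ (v.take (i + 1)) ω

open Finset ProbabilityTheory
open scoped ENNReal

theorem length_eq_of_mem_genF {b n : ℕ} {v : List ℕ} (hv : v ∈ genF b n) : v.length = n := by
  induction n generalizing v with
  | zero => simp_all [genF]
  | succ n ih =>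
    simp only [genF, mem_biUnion, mem_image] at hv
    obtain ⟨w, hw, j, -, rfl⟩ := hv
    simp [ih hw]

theorem card_genF (b n : ℕ) : #(genF b n) = b ^ n := by
  induction n with
  | zero => simp [genF]
  | succ n ih =>
    have hchildren : ∀ v ∈ genF b n, #((Icc 1 b).image fun j => v ++ [j]) = b := fun v _ => by
      rw [card_image_of_injective _ fun j k h => by simpa using h, Nat.card_Icc, Nat.add_sub_cancel]
    have hdisj : (genF b n : Set (List ℕ)).PairwiseDisjoint
        fun v => (Icc 1 b).image fun j => v ++ [j] := by
      intro v hv w hw hvw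
      simp only [Function.onFun, disjoint_left, mem_image]
      rintro x ⟨j, -, rfl⟩ ⟨k, -, hx⟩
      exact hvw (List.append_inj_left hx.symm
        (by rw [length_eq_of_mem_genF hv, length_eq_of_mem_genF hw]))
    rw [genF, card_biUnion hdisj, sum_congr rfl hchildren, sum_const, ih, smul_eq_mul, pow_succ]

theorem Real.le_rpow_of_rpow_le_one {x s : ℝ} (hx : 0 ≤ x) (hs0 : 0 < s) (hs1 : s ≤ 1)
    (h : x ^ s ≤ 1) : x ≤ x ^ s := by
  refine Real.self_le_rpow_of_le_one hx (not_lt.1 fun hx1 => ?_) hs1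
  exact (Real.one_lt_rpow hx1 hs0).not_ge h

theorem summable_sum_of_summable_sum_rpow {ι : Type*} {S : ℕ → Finset ι} {x : ℕ → ι → ℝ}
    {s : ℝ} (hx : ∀ n i, 0 ≤ x n i) (hs0 : 0 < s) (hs1 : s ≤ 1)
    (h : Summable fun n => ∑ i ∈ S n, x n i ^ s) : Summable fun n => ∑ i ∈ S n, x n i := by
  refine h.of_norm_bounded_eventually_nat ?_
  filter_upwards [h.tendsto_atTop_zero.eventually (Iic_mem_nhds zero_lt_one)] with n hn
  rw [Real.norm_of_nonneg (sum_nonneg fun i _ => hx n i)]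
  refine sum_le_sum fun i hi => Real.le_rpow_of_rpow_le_one (hx n i) hs0 hs1 ?_
  exact (single_le_sum (fun j _ => Real.rpow_nonneg (hx n j) s) hi).trans hn

theorem summable_of_tsum_ofReal_ne_top {f : ℕ → ℝ} (hf : ∀ n, 0 ≤ f n)
    (h : ∑' n, ENNReal.ofReal (f n) ≠ ∞) : Summable f := by
  simpa only [ENNReal.toReal_ofReal (hf _)] using ENNReal.summable_toReal h

theorem exists_mem_Ioc_mul_lt_one_of_mul_sInf_lt_one {f : ℝ → ℝ} {c : ℝ} (hc : 1 ≤ c)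
    (hf0 : f 0 = 1) (h : c * sInf (f '' Set.Icc 0 1) < 1) :
    ∃ s ∈ Set.Ioc (0 : ℝ) 1, c * f s < 1 := by
  have hc0 : 0 < c := zero_lt_one.trans_le hc
  obtain ⟨_, ⟨s, hs, rfl⟩, hlt⟩ := exists_lt_of_csInf_lt
    ((Set.nonempty_Icc.2 zero_le_one).image f) ((lt_div_iff₀' hc0).2 h)
  refine ⟨s, ⟨hs.1.lt_of_ne ?_, hs.2⟩, (lt_div_iff₀' hc0).1 hlt⟩
  rintro rfl
  rw [hf0, lt_div_iff₀ hc0, one_mul] at hlt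
  exact hc.not_gt hlt

section Cascade

variable {Ω : Type*} [MeasurableSpace Ω] {P : Measure Ω} {η : List ℕ → Ω → ℝ≥0∞} {R : ℝ≥0∞}

/-- The edges of the root-to-`v` path are the prefixes `v.take (i + 1)`, which are distinct. -/
theorem lintegral_prod_take_eq_pow (hη : ∀ a, Measurable (η a)) (hind : iIndepFun η P)
    (hR : ∀ a, a ≠ [] → ∫⁻ ω, η a ω ∂P = R) (v : List ℕ) :
    ∫⁻ ω, ∏ i ∈ range v.length, η (v.take (i + 1)) ω ∂P = R ^ v.length := by
  have hinj : Set.InjOn (fun i => v.take (i + 1)) (range v.length) := by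
    intro i hi j hj h
    have := congrArg List.length h
    simp only [coe_range, Set.mem_Iio, List.length_take] at hi hj this
    omega
  calc ∫⁻ ω, ∏ i ∈ range v.length, η (v.take (i + 1)) ω ∂P
      = ∫⁻ ω, ∏ a ∈ (range v.length).image (fun i => v.take (i + 1)), η a ω ∂P := by
        simp_rw [prod_image hinj]
    _ = ∏ a ∈ (range v.length).image (fun i => v.take (i + 1)), ∫⁻ ω, η a ω ∂P :=
        lintegral_prod_eq_prod_lintegral_of_indepFun _ _ hind hη
    _ = R ^ v.length := by
        have hne : ∀ i ∈ range v.length, v.take (i + 1) ≠ [] := fun i hi =>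
          List.ne_nil_of_length_pos (by simp at hi ⊢; omega)
        rw [prod_image hinj, prod_congr rfl fun i hi => hR _ (hne i hi), prod_const, card_range]

theorem measurable_prod_take (hη : ∀ a, Measurable (η a)) (v : List ℕ) :
    Measurable fun ω => ∏ i ∈ range v.length, η (v.take (i + 1)) ω :=
  Finset.measurable_prod _ fun _ _ => hη _

theorem lintegral_tsum_sum_genF (hη : ∀ a, Measurable (η a)) (hind : iIndepFun η P)
    (hR : ∀ a, a ≠ [] → ∫⁻ ω, η a ω ∂P = R) (b : ℕ) :
    ∫⁻ ω, ∑' n, ∑ v ∈ genF b (n + 1), ∏ i ∈ range v.length, η (v.take (i + 1)) ω ∂P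
      = ∑' n, ((b : ℝ≥0∞) * R) ^ (n + 1) := by
  have hmeas := measurable_prod_take hη
  rw [lintegral_tsum fun n => (Finset.measurable_sum _ fun v _ => hmeas v).aemeasurable]
  refine tsum_congr fun n => ?_
  have heach : ∀ v ∈ genF b (n + 1),
      ∫⁻ ω, ∏ i ∈ range v.length, η (v.take (i + 1)) ω ∂P = R ^ (n + 1) := fun v hv => by
    rw [lintegral_prod_take_eq_pow hη hind hR, length_eq_of_mem_genF hv]
  rw [lintegral_finsetSum _ fun v _ => hmeas v, sum_congr rfl heach, sum_const, card_genF,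
    nsmul_eq_mul, Nat.cast_pow, mul_pow]

theorem ae_tsum_sum_genF_lt_top (hη : ∀ a, Measurable (η a)) (hind : iIndepFun η P)
    (hR : ∀ a, a ≠ [] → ∫⁻ ω, η a ω ∂P = R) {b : ℕ} (hbR : b * R < 1) :
    ∀ᵐ ω ∂P, ∑' n, ∑ v ∈ genF b (n + 1), ∏ i ∈ range v.length, η (v.take (i + 1)) ω < ∞ := by
  refine ae_lt_top (Measurable.tsum fun n =>
    Finset.measurable_sum _ fun v _ => measurable_prod_take hη v) ?_
  rw [lintegral_tsum_sum_genF hη hind hR, ENNReal.tsum_geometric_add_one]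
  exact ENNReal.mul_ne_top (hbR.trans ENNReal.one_lt_top).ne
    (ENNReal.inv_ne_top.2 (tsub_pos_of_lt hbR).ne')

end Cascade

theorem ofReal_pathProdScalar_rpow {Ω : Type*} {ξ : List ℕ → Ω → ℝ} {ω : Ω}
    (hξ : ∀ a, 0 ≤ ξ a ω) (s : ℝ) (v : List ℕ) :
    ENNReal.ofReal (pathProdScalar ξ v ω ^ s)
      = ∏ i ∈ range v.length, ENNReal.ofReal (ξ (v.take (i + 1)) ω ^ s) := by
  rw [pathProdScalar, ← Real.finsetProd_rpow _ _ fun i _ => hξ _,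
    ENNReal.ofReal_prod_of_nonneg fun i _ => Real.rpow_nonneg (hξ _) s]

/-- Scalar multiplicative cascade on the `b`-ary tree: if
`b · inf_{s ∈ [0,1]} E[ξ^s] < 1`, then `Σ_{n ≥ 1} Σ_{v ∈ Vⁿ} ξ[v] < ∞` a.s. -/
theorem stmt10 {Ω : Type*} [MeasurableSpace Ω] (P : Measure Ω) [IsProbabilityMeasure P]
    (b : ℕ) (hb : 2 ≤ b) (ξ : List ℕ → Ω → ℝ)
    (hmeas : ∀ a, Measurable (ξ a))
    (hindep : ProbabilityTheory.iIndepFun ξ P)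
    (hid : ∀ a : List ℕ, a ≠ [] → Measure.map (ξ a) P = Measure.map (ξ [1]) P)
    (hpos : ∀ a, ∀ᵐ ω ∂P, 0 < ξ a ω)
    (hmom : ∀ s ∈ Set.Icc (0 : ℝ) 1, Integrable (fun ω => ξ [1] ω ^ s) P)
    (hcond : (b : ℝ) *
        sInf ((fun s : ℝ => ∫ ω, ξ [1] ω ^ s ∂P) '' Set.Icc (0 : ℝ) 1) < 1) :
    ∀ᵐ ω ∂P,
      Summable (fun n : ℕ => ∑ v ∈ genF b (n + 1), pathProdScalar ξ v ω) := by
  obtain ⟨s, ⟨hs0, hs1⟩, hbr⟩ := exists_mem_Ioc_mul_lt_one_of_mul_sInf_lt_one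
    (by exact_mod_cast one_le_two.trans hb) (by simp) hcond
  have hg : Measurable fun x : ℝ => ENNReal.ofReal (x ^ s) :=
    (Real.continuous_rpow_const hs0.le).measurable.ennreal_ofReal
  have hmean : ∀ a, a ≠ [] → ∫⁻ ω, ENNReal.ofReal (ξ a ω ^ s) ∂P
      = ENNReal.ofReal (∫ ω, ξ [1] ω ^ s ∂P) := fun a ha => by
    rw [← lintegral_map hg (hmeas a), hid a ha, lintegral_map hg (hmeas [1]),
      ofReal_integral_eq_lintegral_ofReal (hmom s ⟨hs0.le, hs1⟩)
        ((hpos [1]).mono fun ω h => Real.rpow_nonneg h.le s)]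
  have hbR : (b : ℝ≥0∞) * ENNReal.ofReal (∫ ω, ξ [1] ω ^ s ∂P) < 1 := by
    rw [← ENNReal.ofReal_natCast, ← ENNReal.ofReal_mul (Nat.cast_nonneg b)]
    exact ENNReal.ofReal_lt_one.2 hbr
  filter_upwards [ae_tsum_sum_genF_lt_top (fun a => hg.comp (hmeas a))
    (hindep.comp _ fun _ => hg) hmean hbR, ae_all_iff.2 hpos] with ω hfin hξ
  have hnonneg (v : List ℕ) : 0 ≤ pathProdScalar ξ v ω := prod_nonneg fun i _ => (hξ _).le
  have hnonneg_rpow (v : List ℕ) : 0 ≤ pathProdScalar ξ v ω ^ s := Real.rpow_nonneg (hnonneg v) s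
  refine summable_sum_of_summable_sum_rpow (fun _ => hnonneg) hs0 hs1
    (summable_of_tsum_ofReal_ne_top (fun n => sum_nonneg fun v _ => hnonneg_rpow v) ?_)
  simp_rw [ENNReal.ofReal_sum_of_nonneg fun v _ => hnonneg_rpow v,
    ofReal_pathProdScalar_rpow fun a => (hξ a).le]
  exact hfin.ne
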